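/- Let N ∈ ℕ with N ≥ 2 and let γ satisfy the curve hypotheses with parameter N, and set ω := limsup_{t→0⁺} ln|γ(t)|/ln t. Let p, q, r ∈ [1,∞], and suppose there is a constant C such that ‖Tf‖_{L^r_u L^q_x(ℝ²×[1,2])} ≤ C‖f‖_{L^p(ℝ²)} for all f ∈ L^p(ℝ²). Then 1 + (1+ω)(1/q − 1/p) ≥ 0 (with the convention 1/∞ = 0). -/

import Mathlib

open MeasureTheory Filter Set
open scoped ENNReal NNReal

noncomputable section

/-- The averaging operator along the dilated plane curve `(u t, u γ(t))`:
`Tf(x,u) = ∫_0^1 f(x₁ - u t, x₂ - u γ(t)) dt`. -/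
def Tavg (γ : ℝ → ℝ) (f : ℝ × ℝ → ℝ) (x : ℝ × ℝ) (u : ℝ) : ℝ :=
  ∫ t in Set.Ioc (0 : ℝ) 1, f (x.1 - u * t, x.2 - u * γ t)

/-- The curve hypotheses with parameter `N`: `γ ∈ C^N((0,1])`, `γ(t) → 0` as `t → 0⁺`,
`γ` monotonic on `(0,1]`, with the lower bounds (i) for `j = 1,2` and the upper
bounds (ii) for `j = 1,…,N` on `|tʲ γ⁽ʲ⁾(t) / γ(t)|`. -/
def CurveHyp (γ : ℝ → ℝ) (N : ℕ) : Prop :=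
  ContDiffOn ℝ N γ (Set.Ioc 0 1) ∧
  Filter.Tendsto γ (nhdsWithin 0 (Set.Ioi 0)) (nhds 0) ∧
  (MonotoneOn γ (Set.Ioc 0 1) ∨ AntitoneOn γ (Set.Ioc 0 1)) ∧
  (∀ j : ℕ, 1 ≤ j → j ≤ 2 → ∃ C : ℝ, 0 < C ∧ ∀ t ∈ Set.Ioc (0 : ℝ) 1,
    C ≤ |t ^ j * iteratedDerivWithin j γ (Set.Ioc 0 1) t / γ t|) ∧
  (∀ j : ℕ, 1 ≤ j → j ≤ N → ∃ C : ℝ, 0 < C ∧ ∀ t ∈ Set.Ioc (0 : ℝ) 1,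
    |t ^ j * iteratedDerivWithin j γ (Set.Ioc 0 1) t / γ t| ≤ C)

/-- `ω := limsup_{t→0⁺} ln|γ(t)| / ln t`. -/
def curveOmega (γ : ℝ → ℝ) : ℝ :=
  Filter.limsup (fun t => Real.log |γ t| / Real.log t) (nhdsWithin 0 (Set.Ioi 0))

/-- The `L^q(μ)` norm (valued in `ℝ≥0∞`) of an `ℝ≥0∞`-valued function, with the
essential supremum when `q = ∞`. -/
def eLpNormENN {α : Type*} [MeasurableSpace α] (g : α → ℝ≥0∞) (q : ℝ≥0∞)
    (μ : Measure α) : ℝ≥0∞ :=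
  if q = ∞ then essSup g μ else (∫⁻ a, g a ^ q.toReal ∂μ) ^ (1 / q.toReal)


/-- The time-space mixed norm `‖F‖_{L^r_u L^q_x(ℝ² × [1,2])}`. -/
def mixedUX (r q : ℝ≥0∞) (F : ℝ × ℝ → ℝ → ℝ) : ℝ≥0∞ :=
  eLpNormENN (fun u => eLpNorm (fun x => F x u) q (volume : Measure (ℝ × ℝ))) r
    ((volume : Measure ℝ).restrict (Set.Icc 1 2))


/-!
Test the estimate on `f = 1_R` with `R = [0,4δ] × [0,4γ(δ)]` (intervals oriented by the sign
of `γ(δ)`). Since `γ` is monotone with `γ(0⁺) = 0`, every point of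
`S = [2δ,4δ] × [2γ(δ),4γ(δ)]` sees `R` along the arc `t ∈ (0,δ]` of each dilated curve, so
`Tf ≥ δ` on `S × [1,2]`; with `|R| = 4|S| = 16 δ|γ(δ)|` this gives
`δ (δ|γ(δ)|)^{1/q} ≲ (δ|γ(δ)|)^{1/p}`. If `1/q ≤ 1/p`, evaluating along `δ → 0` with
`|γ(δ)| < δ^{ω'}`, `ω' < ω` (which happens infinitely often), keeps
`δ^{1 + (1+ω')(1/q - 1/p)}` bounded, so that exponent is nonnegative; let `ω' → ω`.
-/

open Topology

lemma le_eLpNormENN_of_ae_le {α : Type*} [MeasurableSpace α] {μ : Measure α}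
    [IsProbabilityMeasure μ] {g : α → ℝ≥0∞} {K r : ℝ≥0∞} (hr : r ≠ 0)
    (hg : ∀ᵐ a ∂μ, K ≤ g a) : K ≤ eLpNormENN g r μ := by
  unfold eLpNormENN
  split_ifs with hr_top
  · calc K = essSup (fun _ => K) μ := (essSup_const K (IsProbabilityMeasure.ne_zero μ)).symm
      _ ≤ essSup g μ := essSup_mono_ae hg
  · have hr_pos : 0 < r.toReal := ENNReal.toReal_pos hr hr_top
    calc K = (∫⁻ _, K ^ r.toReal ∂μ) ^ (1 / r.toReal) := by
          rw [lintegral_const, measure_univ, mul_one, ← ENNReal.rpow_mul,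
            mul_one_div_cancel hr_pos.ne', ENNReal.rpow_one]
      _ ≤ (∫⁻ a, g a ^ r.toReal ∂μ) ^ (1 / r.toReal) := by
          gcongr ?_ ^ _
          exact lintegral_mono_ae (hg.mono fun a ha => by gcongr)

instance isProbabilityMeasure_volume_restrict_Icc_one_two :
    IsProbabilityMeasure ((volume : Measure ℝ).restrict (Icc 1 2)) :=
  ⟨by norm_num [Real.volume_Icc]⟩

lemma le_Tavg_indicator {γ : ℝ → ℝ} (hγ : AEMeasurable γ (volume.restrict (Ioc 0 1)))
    {R : Set (ℝ × ℝ)} (hR : MeasurableSet R) {δ u : ℝ} (hδ₀ : 0 ≤ δ) (hδ₁ : δ ≤ 1)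
    {x : ℝ × ℝ} (hx : ∀ t ∈ Ioc (0 : ℝ) δ, (x.1 - u * t, x.2 - u * γ t) ∈ R) :
    δ ≤ Tavg γ (R.indicator fun _ => 1) x u := by
  set f : ℝ × ℝ → ℝ := R.indicator fun _ => 1
  set ψ : ℝ → ℝ × ℝ := fun t => (x.1 - u * t, x.2 - u * γ t)
  have hψ : AEMeasurable ψ (volume.restrict (Ioc 0 1)) := by fun_prop
  have hint : IntegrableOn (f ∘ ψ) (Ioc 0 1) := by
    refine Integrable.mono' (integrable_const (1 : ℝ))
      ((measurable_const.indicator hR).comp_aemeasurable hψ).aestronglyMeasurable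
      (ae_of_all _ fun t => (norm_indicator_le_norm_self (fun _ => (1 : ℝ)) _).trans_eq norm_one)
  calc δ = ∫ t in Ioc (0 : ℝ) δ, (f ∘ ψ) t := by
        rw [setIntegral_congr_fun measurableSet_Ioc fun t ht =>
          show (f ∘ ψ) t = 1 from indicator_of_mem (hx t ht) (fun _ => (1 : ℝ))]
        simp [hδ₀]
    _ ≤ ∫ t in Ioc (0 : ℝ) 1, (f ∘ ψ) t :=
        setIntegral_mono_set hint (ae_of_all _ fun t => indicator_nonneg (fun _ _ => zero_le_one) _)
          (Ioc_subset_Ioc_right hδ₁).eventuallyLE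

lemma sub_mul_mem_uIcc {a b g u : ℝ} (ha : a ∈ uIcc (2 * g) (4 * g)) (hb : b ∈ uIcc 0 g)
    (hu : u ∈ Icc (1 : ℝ) 2) : a - u * b ∈ uIcc 0 (4 * g) := by
  obtain ⟨hu₁, hu₂⟩ := hu
  rcases le_total 0 g with hg | hg
  · rw [uIcc_of_le (by linarith)] at ha ⊢
    rw [uIcc_of_le hg] at hb
    exact ⟨by nlinarith [hb.1, hb.2, ha.1], by nlinarith [hb.1, ha.2]⟩
  · rw [uIcc_of_ge (by linarith)] at ha ⊢
    rw [uIcc_of_ge hg] at hb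
    exact ⟨by nlinarith [hb.2, ha.1], by nlinarith [hb.1, hb.2, ha.2]⟩

lemma mem_Icc_zero_of_monotoneOn {γ : ℝ → ℝ} {a : ℝ} (hγ : MonotoneOn γ (Ioc 0 a))
    (hlim : Tendsto γ (𝓝[>] 0) (𝓝 0)) {δ t : ℝ} (ht : t ∈ Ioc 0 δ) (hδ : δ ≤ a) :
    γ t ∈ Icc 0 (γ δ) := by
  have hta : t ∈ Ioc 0 a := ⟨ht.1, ht.2.trans hδ⟩
  refine ⟨le_of_tendsto hlim ?_, hγ hta ⟨ht.1.trans_le ht.2, hδ⟩ ht.2⟩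
  filter_upwards [Ioo_mem_nhdsGT ht.1] with s hs
  exact hγ ⟨hs.1, hs.2.le.trans hta.2⟩ hta hs.2.le

lemma mem_uIcc_zero_of_monotoneOn_or_antitoneOn {γ : ℝ → ℝ} {a : ℝ}
    (hγ : MonotoneOn γ (Ioc 0 a) ∨ AntitoneOn γ (Ioc 0 a))
    (hlim : Tendsto γ (𝓝[>] 0) (𝓝 0)) {δ t : ℝ} (ht : t ∈ Ioc 0 δ) (hδ : δ ≤ a) :
    γ t ∈ uIcc 0 (γ δ) := by
  rcases hγ with hγ | hγ
  · exact Icc_subset_uIcc (mem_Icc_zero_of_monotoneOn hγ hlim ht hδ)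
  · have hneg := mem_Icc_zero_of_monotoneOn hγ.neg (by simpa using hlim.neg) ht hδ
    simp only [mem_Icc] at hneg
    exact Icc_subset_uIcc' ⟨by linarith [hneg.2], by linarith [hneg.1]⟩

lemma CurveHyp.ne_zero {γ : ℝ → ℝ} {N : ℕ} (h : CurveHyp γ N) {t : ℝ}
    (ht : t ∈ Ioc (0 : ℝ) 1) : γ t ≠ 0 := by
  obtain ⟨c, hc, hc_le⟩ := h.2.2.2.1 1 le_rfl one_le_two
  intro h0
  have := hc_le t ht
  rw [h0, div_zero, abs_zero] at this
  linarith

def TimeSpaceEstimate (γ : ℝ → ℝ) (p q r : ℝ≥0∞) (C : ℝ) : Prop :=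
  ∀ f : ℝ × ℝ → ℝ, MemLp f p volume →
    mixedUX r q (Tavg γ f) ≤ ENNReal.ofReal C * eLpNorm f p volume

namespace TimeSpaceEstimate

variable {γ : ℝ → ℝ} {p q r : ℝ≥0∞} {C : ℝ}

lemma mono (hT : TimeSpaceEstimate γ p q r C) {C' : ℝ} (hC : C ≤ C') :
    TimeSpaceEstimate γ p q r C' := fun f hf =>
  (hT f hf).trans (by gcongr)

lemma ofReal_mul_volume_rpow_le (hT : TimeSpaceEstimate γ p q r C)
    (hγ : AEMeasurable γ (volume.restrict (Ioc 0 1))) (hq : q ≠ 0) (hr : r ≠ 0)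
    {δ : ℝ} (hδ₀ : 0 ≤ δ) (hδ₁ : δ ≤ 1) {R S : Set (ℝ × ℝ)} (hR : MeasurableSet R)
    (hR_fin : volume R ≠ ∞) (hS : MeasurableSet S) (hS_pos : volume S ≠ 0)
    (hRS : ∀ x ∈ S, ∀ u ∈ Icc (1 : ℝ) 2, ∀ t ∈ Ioc (0 : ℝ) δ, (x.1 - u * t, x.2 - u * γ t) ∈ R) :
    ENNReal.ofReal δ * volume S ^ (1 / q.toReal) ≤
      ENNReal.ofReal C * volume R ^ (1 / p.toReal) := by
  set f : ℝ × ℝ → ℝ := R.indicator fun _ => 1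
  have hS_restrict : volume.restrict S ≠ 0 := by rwa [Ne, Measure.restrict_eq_zero]
  have h_slice : ∀ u ∈ Icc (1 : ℝ) 2,
      ENNReal.ofReal δ * volume S ^ (1 / q.toReal) ≤ eLpNorm (fun x => Tavg γ f x u) q volume := by
    intro u hu
    calc ENNReal.ofReal δ * volume S ^ (1 / q.toReal)
        = eLpNorm (fun _ => δ) q (volume.restrict S) := by
          rw [eLpNorm_const _ hq hS_restrict, Measure.restrict_apply_univ,
            Real.enorm_eq_ofReal hδ₀]
      _ ≤ eLpNorm (fun x => Tavg γ f x u) q (volume.restrict S) := by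
          refine eLpNorm_mono_ae ((ae_restrict_mem hS).mono fun x hx => ?_)
          rw [Real.norm_of_nonneg hδ₀]
          exact (le_Tavg_indicator hγ hR hδ₀ hδ₁ (hRS x hx u hu)).trans (le_abs_self _)
      _ ≤ eLpNorm (fun x => Tavg γ f x u) q volume :=
          eLpNorm_mono_measure _ Measure.restrict_le_self
  calc ENNReal.ofReal δ * volume S ^ (1 / q.toReal)
      ≤ mixedUX r q (Tavg γ f) :=
        le_eLpNormENN_of_ae_le hr ((ae_restrict_mem measurableSet_Icc).mono h_slice)
    _ ≤ ENNReal.ofReal C * eLpNorm f p volume :=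
        hT f (memLp_indicator_const p hR 1 (Or.inr hR_fin))
    _ ≤ ENNReal.ofReal C * volume R ^ (1 / p.toReal) := by
        gcongr
        simpa using eLpNorm_indicator_const_le (μ := volume) (1 : ℝ) p

lemma mul_rpow_le {N : ℕ} (hT : TimeSpaceEstimate γ p q r C) (h : CurveHyp γ N) (hq : q ≠ 0)
    (hr : r ≠ 0) (hC : 0 ≤ C) {δ : ℝ} (hδ : δ ∈ Ioc (0 : ℝ) 1) :
    δ * (δ * |γ δ|) ^ (q⁻¹).toReal ≤
      C * 16 ^ (p⁻¹).toReal * (δ * |γ δ|) ^ (p⁻¹).toReal := by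
  set g := γ δ
  set m := δ * |g|
  have hm : 0 < m := mul_pos hδ.1 (abs_pos.2 (h.ne_zero hδ))
  have hR : volume (uIcc 0 (4 * δ) ×ˢ uIcc 0 (4 * g)) = ENNReal.ofReal (16 * m) := by
    rw [Measure.volume_eq_prod, Measure.prod_prod, Real.volume_interval, Real.volume_interval,
      ← ENNReal.ofReal_mul (abs_nonneg _)]
    congr 1
    simp only [m, sub_zero, abs_mul, abs_of_pos hδ.1]
    norm_num
    ring
  have hS : volume (uIcc (2 * δ) (4 * δ) ×ˢ uIcc (2 * g) (4 * g)) = ENNReal.ofReal (4 * m) := by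
    rw [Measure.volume_eq_prod, Measure.prod_prod, Real.volume_interval, Real.volume_interval,
      ← ENNReal.ofReal_mul (abs_nonneg _)]
    congr 1
    simp only [m, ← sub_mul, abs_mul, abs_of_pos hδ.1]
    norm_num
    ring
  have hRS : ∀ x ∈ uIcc (2 * δ) (4 * δ) ×ˢ uIcc (2 * g) (4 * g), ∀ u ∈ Icc (1 : ℝ) 2,
      ∀ t ∈ Ioc 0 δ, (x.1 - u * t, x.2 - u * γ t) ∈ uIcc 0 (4 * δ) ×ˢ uIcc 0 (4 * g) :=
    fun x hx u hu t ht =>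
      ⟨sub_mul_mem_uIcc hx.1 (by simpa [uIcc_of_le hδ.1.le] using Ioc_subset_Icc_self ht) hu,
        sub_mul_mem_uIcc hx.2 (mem_uIcc_zero_of_monotoneOn_or_antitoneOn h.2.2.1 h.2.1 ht hδ.2) hu⟩
  have key := hT.ofReal_mul_volume_rpow_le (h.1.continuousOn.aemeasurable measurableSet_Ioc)
    hq hr hδ.1.le hδ.2 (measurableSet_uIcc.prod measurableSet_uIcc) (hR ▸ ENNReal.ofReal_ne_top)
    (measurableSet_uIcc.prod measurableSet_uIcc) (hS ▸ (ENNReal.ofReal_pos.2 (by positivity)).ne')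
    hRS
  rw [hR, hS, one_div, one_div, ← ENNReal.toReal_inv, ← ENNReal.toReal_inv,
    ENNReal.ofReal_rpow_of_pos (by positivity), ENNReal.ofReal_rpow_of_pos (by positivity),
    ← ENNReal.ofReal_mul hδ.1.le, ← ENNReal.ofReal_mul hC,
    ENNReal.ofReal_le_ofReal_iff (by positivity)] at key
  calc δ * m ^ (q⁻¹).toReal ≤ δ * (4 * m) ^ (q⁻¹).toReal := by
        have := hδ.1; gcongr; linarith
    _ ≤ C * (16 * m) ^ (p⁻¹).toReal := key
    _ = C * 16 ^ (p⁻¹).toReal * m ^ (p⁻¹).toReal := by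
        rw [Real.mul_rpow (by norm_num) hm.le, mul_assoc]

end TimeSpaceEstimate

lemma eventually_log_abs_div_log_nonneg {γ : ℝ → ℝ} (hlim : Tendsto γ (𝓝[>] 0) (𝓝 0)) :
    ∀ᶠ t in 𝓝[>] 0, 0 ≤ Real.log |γ t| / Real.log t := by
  have hsmall : ∀ᶠ t in 𝓝[>] 0, |γ t| < 1 :=
    (abs_zero (α := ℝ) ▸ hlim.abs).eventually_lt_const one_pos
  filter_upwards [hsmall, Ioo_mem_nhdsGT one_pos] with t hγt ht
  exact div_nonneg_of_nonpos (Real.log_nonpos (abs_nonneg _) hγt.le)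
    (Real.log_neg ht.1 ht.2).le

lemma curveOmega_nonneg {γ : ℝ → ℝ} (hlim : Tendsto γ (𝓝[>] 0) (𝓝 0)) : 0 ≤ curveOmega γ := by
  by_cases hbdd : IsBoundedUnder (· ≤ ·) (𝓝[>] 0) fun t => Real.log |γ t| / Real.log t
  · exact le_limsup_of_frequently_le (eventually_log_abs_div_log_nonneg hlim).frequently hbdd
  · -- an unbounded `limsup` is `0` in `ℝ`
    exact (Real.limsup_of_not_isBoundedUnder hbdd).ge

lemma frequently_abs_lt_rpow {γ : ℝ → ℝ} (hlim : Tendsto γ (𝓝[>] 0) (𝓝 0)) {ω : ℝ}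
    (hω : ω < curveOmega γ) :
    ∃ᶠ t in 𝓝[>] 0, |γ t| < t ^ ω := by
  have hcobdd : IsCoboundedUnder (· ≤ ·) (𝓝[>] 0) fun t => Real.log |γ t| / Real.log t :=
    isCoboundedUnder_le_of_eventually_le _ (eventually_log_abs_div_log_nonneg hlim)
  refine ((frequently_lt_of_lt_limsup hcobdd hω).and_eventually
    (Ioo_mem_nhdsGT one_pos)).mono fun t ⟨hωt, ht⟩ => ?_
  rw [lt_div_iff_of_neg (Real.log_neg ht.1 ht.2)] at hωt
  rcases (abs_nonneg (γ t)).eq_or_lt with h0 | hpos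
  · rw [← h0]
    exact Real.rpow_pos_of_pos ht.1 ω
  · rw [← Real.log_lt_log_iff hpos (Real.rpow_pos_of_pos ht.1 ω), Real.log_rpow ht.1]
    linarith

lemma nonneg_of_frequently_rpow_le {e K : ℝ} (h : ∃ᶠ δ in 𝓝[>] 0, δ ^ e ≤ K) : 0 ≤ e := by
  by_contra! he
  exact h (((tendsto_rpow_neg_nhdsGT_zero he).eventually_gt_atTop K).mono fun _ => not_le.2)

lemma rpow_one_add_mul_sub_le {δ m a α β K : ℝ} (hδ : 0 < δ) (hm : 0 < m) (hmδ : m ≤ δ ^ a)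
    (hαβ : α ≤ β) (hK : 0 ≤ K) (h : δ * m ^ α ≤ K * m ^ β) :
    δ ^ (1 + a * (α - β)) ≤ K := by
  have hδm : δ ≤ K * m ^ (β - α) := by
    rwa [Real.rpow_sub hm, mul_div_assoc', le_div_iff₀ (Real.rpow_pos_of_pos hm α)]
  have hmδ' : m ^ (β - α) ≤ δ ^ (a * (β - α)) := by
    rw [Real.rpow_mul hδ.le]
    exact Real.rpow_le_rpow hm.le hmδ (by linarith)
  calc δ ^ (1 + a * (α - β)) = δ / δ ^ (a * (β - α)) := by
        rw [show 1 + a * (α - β) = 1 - a * (β - α) by ring, Real.rpow_sub hδ, Real.rpow_one]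
    _ ≤ K := by
        rw [div_le_iff₀ (Real.rpow_pos_of_pos hδ _)]
        exact hδm.trans (by gcongr)

theorem timeSpace_necessity_II_general (N : ℕ) (γ : ℝ → ℝ) (h : CurveHyp γ N)
    (p q r : ℝ≥0∞) (hq : 1 ≤ q) (hr : 1 ≤ r)
    (hbdd : ∃ C : ℝ, ∀ f : ℝ × ℝ → ℝ, MemLp f p volume →
      mixedUX r q (Tavg γ f) ≤ ENNReal.ofReal C * eLpNorm f p volume) :
    0 ≤ 1 + (1 + curveOmega γ) * ((q⁻¹).toReal - (p⁻¹).toReal) := by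
  obtain ⟨C, hT⟩ := hbdd
  replace hT : TimeSpaceEstimate γ p q r |C| := TimeSpaceEstimate.mono hT (le_abs_self C)
  have hq0 : q ≠ 0 := (zero_lt_one.trans_le hq).ne'
  have hr0 : r ≠ 0 := (zero_lt_one.trans_le hr).ne'
  set α := (q⁻¹).toReal
  set β := (p⁻¹).toReal
  have hω₀ := curveOmega_nonneg h.2.1
  rcases lt_or_ge β α with hβα | hαβ
  · nlinarith
  have hexp : ∀ ω < curveOmega γ, 0 ≤ 1 + (1 + ω) * (α - β) := fun ω hω =>
    nonneg_of_frequently_rpow_le <|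
      ((frequently_abs_lt_rpow h.2.1 hω).and_eventually (Ioc_mem_nhdsGT one_pos)).mono
        fun δ ⟨hγδ, hδ⟩ => by
          refine rpow_one_add_mul_sub_le hδ.1 (mul_pos hδ.1 (abs_pos.2 (h.ne_zero hδ))) ?_ hαβ
            (by positivity) (hT.mul_rpow_le h hq0 hr0 (abs_nonneg C) hδ)
          rw [Real.rpow_add hδ.1, Real.rpow_one]
          exact mul_le_mul_of_nonneg_left hγδ.le hδ.1.le
  have hcont : Continuous fun ω : ℝ => 1 + (1 + ω) * (α - β) := by fun_prop
  exact ge_of_tendsto ((hcont.tendsto _).mono_left nhdsWithin_le_nhds)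
    (eventually_nhdsWithin_of_forall (a := curveOmega γ) (s := Iio (curveOmega γ)) hexp)

/-- Theorem 1.5, necessary condition (II): if the time-space estimate
`L^p_x → L^r_u L^q_x` holds for `T`, then `1 + (1+ω)(1/q - 1/p) ≥ 0`. -/
theorem timeSpace_necessity_II (N : ℕ) (hN : 2 ≤ N) (γ : ℝ → ℝ) (h : CurveHyp γ N)
    (p q r : ℝ≥0∞) (hp : 1 ≤ p) (hq : 1 ≤ q) (hr : 1 ≤ r)
    (hbdd : ∃ C : ℝ, ∀ f : ℝ × ℝ → ℝ, MemLp f p volume →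
      mixedUX r q (Tavg γ f) ≤ ENNReal.ofReal C * eLpNorm f p volume) :
    0 ≤ 1 + (1 + curveOmega γ) * ((q⁻¹).toReal - (p⁻¹).toReal) :=
  timeSpace_necessity_II_general N γ h p q r hq hr hbdd

end
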